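/- Let Y₁ ≥ Y₂ ≥ ⋯ ≥ Y_n be real numbers and c₁,…,c_n > 0 be fixed. Consider f(q) = (∑ᵢ Yᵢ(1 + qᵢ cᵢ))/(∑ᵢ (1 + qᵢ cᵢ)) over q ∈ [1/Λ, Λ]ⁿ with Λ ≥ 1. Then the minimum of f is attained at a threshold vector of the form qᵢ = 1/Λ for i ≤ b and qᵢ = Λ for i > b, for some b ∈ {0,1,…,n}. -/
import Mathlib


/-- Sensitivity-analysis optimization (Algorithm 2, step 2e): for sorted values
`Y₁ ≥ ⋯ ≥ Y_n`, positive `cᵢ`, and `Λ ≥ 1`, the minimum over the box `[1/Λ, Λ]ⁿ` of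
`q ↦ (∑ᵢ Yᵢ(1 + qᵢcᵢ))/(∑ᵢ(1 + qᵢcᵢ))` is attained at a threshold vector with
`qᵢ = 1/Λ` for `i ≤ b` and `qᵢ = Λ` for `i > b`, for some `b ∈ {0,…,n}`. -/
theorem stmt_8 (n : ℕ) (Y c : Fin n → ℝ)
    (hY : ∀ i j : Fin n, i ≤ j → Y j ≤ Y i)
    (hc : ∀ i, 0 < c i) (Λ : ℝ) (hΛ : 1 ≤ Λ) :
    ∃ b ≤ n, ∀ q : Fin n → ℝ, (∀ i, q i ∈ Set.Icc (1 / Λ) Λ) →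
      (∑ i, Y i * (1 + (if (i : ℕ) < b then 1 / Λ else Λ) * c i)) /
          (∑ i : Fin n, (1 + (if (i : ℕ) < b then 1 / Λ else Λ) * c i))
        ≤ (∑ i, Y i * (1 + q i * c i)) / (∑ i, (1 + q i * c i)) := by
  rcases Nat.eq_zero_or_pos n with hn | hn
  · subst hn
    exact ⟨0, le_refl 0, fun q hq => by simp⟩
  have hΛ0 : 0 < Λ := lt_of_lt_of_le one_pos hΛ
  have hΛinv : 0 < 1 / Λ := by positivity
  have hΛinvΛ : 1 / Λ ≤ Λ := by
    rw [div_le_iff₀ hΛ0]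
    nlinarith
  set g : ℕ → ℝ := fun b =>
    (∑ i, Y i * (1 + (if (i : ℕ) < b then 1 / Λ else Λ) * c i)) /
      (∑ i : Fin n, (1 + (if (i : ℕ) < b then 1 / Λ else Λ) * c i)) with hg
  -- positivity of denominators for weights in the box
  have hden : ∀ q : Fin n → ℝ, (∀ i, 1 / Λ ≤ q i) →
      0 < ∑ i, (1 + q i * c i) := by
    intro q hq
    have : ∀ i : Fin n, (0:ℝ) < 1 + q i * c i := by
      intro i
      have h1 : 0 < q i := lt_of_lt_of_le hΛinv (hq i)
      nlinarith [hc i]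
    exact Finset.sum_pos (fun i _ => this i) ⟨⟨0, hn⟩, Finset.mem_univ _⟩
  -- key: for any q in the box there is a threshold b with g b ≤ f q
  have key : ∀ q : Fin n → ℝ, (∀ i, q i ∈ Set.Icc (1 / Λ) Λ) →
      ∃ b ≤ n, g b ≤ (∑ i, Y i * (1 + q i * c i)) / (∑ i, (1 + q i * c i)) := by
    intro q hq
    set lam : ℝ := (∑ i, Y i * (1 + q i * c i)) / (∑ i, (1 + q i * c i)) with hlam
    set S : Finset (Fin n) := Finset.univ.filter (fun i => lam ≤ Y i) with hS
    refine ⟨S.card, le_trans (Finset.card_filter_le _ _) (by simp), ?_⟩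
    have hmem : ∀ i : Fin n, (i : ℕ) < S.card ↔ lam ≤ Y i := by
      intro i
      constructor
      · intro hi
        by_contra hYi
        push_neg at hYi
        have hsub : S ⊆ Finset.Iio i := by
          intro j hj
          rw [hS, Finset.mem_filter] at hj
          rw [Finset.mem_Iio]
          by_contra hji
          push_neg at hji
          exact absurd (le_trans hj.2 (hY i j hji)) (not_le_of_gt hYi)
        have := Finset.card_le_card hsub
        rw [Fin.card_Iio] at this
        omega
      · intro hYi
        have hsub : Finset.Iic i ⊆ S := by
          intro j hj
          rw [Finset.mem_Iic] at hj
          rw [hS, Finset.mem_filter]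
          exact ⟨Finset.mem_univ _, le_trans hYi (hY j i hj)⟩
        have := Finset.card_le_card hsub
        rw [Fin.card_Iic] at this
        omega
    set w : Fin n → ℝ := fun i => if (i : ℕ) < S.card then 1 / Λ else Λ with hw
    have hwbox : ∀ i, 1 / Λ ≤ w i := by
      intro i
      rw [hw]
      dsimp only
      split
      · exact le_refl _
      · exact hΛinvΛ
    have hDq : 0 < ∑ i, (1 + q i * c i) := hden q (fun i => (hq i).1)
    have hDw : 0 < ∑ i, (1 + w i * c i) := hden w hwbox
    -- the centered sum at q is zero
    have hzero : ∑ i, (Y i - lam) * (1 + q i * c i) = 0 := by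
      have : ∑ i, (Y i - lam) * (1 + q i * c i)
          = (∑ i, Y i * (1 + q i * c i)) - lam * ∑ i, (1 + q i * c i) := by
        rw [Finset.mul_sum, ← Finset.sum_sub_distrib]
        congr 1
        ext i
        ring
      rw [this, hlam, div_mul_cancel₀ _ (ne_of_gt hDq)]
      ring
    -- coordinatewise comparison
    have hcoord : ∀ i : Fin n,
        (Y i - lam) * (1 + w i * c i) ≤ (Y i - lam) * (1 + q i * c i) := by
      intro i
      rcases le_or_gt lam (Y i) with hYi | hYi
      · have hwi : w i = 1 / Λ := by rw [hw]; simp [(hmem i).2 hYi]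
        have h1 : w i ≤ q i := hwi ▸ (hq i).1
        have := mul_le_mul_of_nonneg_right h1 (hc i).le
        exact mul_le_mul_of_nonneg_left (by linarith) (by linarith)
      · have hwi : w i = Λ := by
          rw [hw]
          have : ¬ ((i : ℕ) < S.card) := by
            rw [hmem i]; exact not_le_of_gt hYi
          simp [this]
        have h1 : q i ≤ w i := hwi ▸ (hq i).2
        have := mul_le_mul_of_nonneg_right h1 (hc i).le
        exact mul_le_mul_of_nonpos_left (by linarith) (by linarith)
    have hsum : ∑ i, (Y i - lam) * (1 + w i * c i) ≤ 0 := by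
      rw [← hzero]
      exact Finset.sum_le_sum (fun i _ => hcoord i)
    have hexp : ∑ i, (Y i - lam) * (1 + w i * c i)
        = (∑ i, Y i * (1 + w i * c i)) - lam * ∑ i, (1 + w i * c i) := by
      rw [Finset.mul_sum, ← Finset.sum_sub_distrib]
      congr 1
      ext i
      ring
    rw [hexp] at hsum
    rw [hg]
    dsimp only
    rw [div_le_iff₀ hDw]
    calc (∑ i, Y i * (1 + (if (i : ℕ) < S.card then 1 / Λ else Λ) * c i))
        = ∑ i, Y i * (1 + w i * c i) := rfl
      _ ≤ lam * ∑ i, (1 + w i * c i) := by linarith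
  -- minimize g over thresholds
  obtain ⟨b₀, hb₀mem, hb₀min⟩ :=
    Finset.exists_min_image (Finset.range (n + 1)) g ⟨0, by simp⟩
  refine ⟨b₀, Nat.lt_succ_iff.mp (Finset.mem_range.mp hb₀mem), fun q hq => ?_⟩
  obtain ⟨b, hbn, hb⟩ := key q hq
  exact le_trans (hb₀min b (Finset.mem_range.mpr (Nat.lt_succ_iff.mpr hbn))) hb
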